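/- Let A ∈ ℂ^{m×n×p} admit a Moore–Penrose inverse A†. Let α ∈ ℂ and define Z₀ = α·A^* and Z_{j+1} = Z_j *_M Σ_{k=0}^{18} (I_M − A *_M Z_j)^k (the hyperpower iteration of order 19). If ‖mat(A *_M A† − A *_M Z₀)‖_F < 1, then the sequence Z_j converges entrywise to A†, with ‖mat(A† − Z_j)‖_F ≤ ‖mat(A†)‖_F · ‖mat(A *_M A† − A *_M Z₀)‖_F^{19^j} for all j ≥ 0. -/

import Mathlib

open Matrix Finset

/-- A third-order tensor in `ℂ^{m×n×p}`, given by its `p` frontal slices. -/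
abbrev Tensor (m n p : ℕ) := Fin p → Matrix (Fin m) (Fin n) ℂ

/-- The transform `Â = A ×₃ M` (mode-3 product with `M`). -/
noncomputable def hatT {m n p : ℕ} (M : Matrix (Fin p) (Fin p) ℂ) (A : Tensor m n p) :
    Tensor m n p :=
  fun l => ∑ s, M l s • A s

/-- `mat(A)`: the block-diagonal matrix whose blocks are frontal slices of `A ×₃ M`. -/
noncomputable def matT {m n p : ℕ} (M : Matrix (Fin p) (Fin p) ℂ) (A : Tensor m n p) :
    Matrix (Fin m × Fin p) (Fin n × Fin p) ℂ :=
  Matrix.blockDiagonal (hatT M A)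

/-- The M-product `A *_M B`, determined by `mat(A *_M B) = mat(A)·mat(B)`. -/
noncomputable def mprod {m n k p : ℕ} (M : Matrix (Fin p) (Fin p) ℂ)
    (A : Tensor m n p) (B : Tensor n k p) : Tensor m k p :=
  fun l => ∑ s, M⁻¹ l s • (hatT M A s * hatT M B s)

/-- The conjugate transpose `A^*`, determined by `mat(A^*) = mat(A)^*`. -/
noncomputable def mstar {m n p : ℕ} (M : Matrix (Fin p) (Fin p) ℂ) (A : Tensor m n p) :
    Tensor n m p :=
  fun l => ∑ s, M⁻¹ l s • (hatT M A s)ᴴ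

/-- The identity tensor `I_M ∈ ℂ^{m×m×p}`, determined by `mat(I_M) = I`. -/
noncomputable def idT {p : ℕ} (M : Matrix (Fin p) (Fin p) ℂ) (m : ℕ) : Tensor m m p :=
  fun l => ∑ s, M⁻¹ l s • (1 : Matrix (Fin m) (Fin m) ℂ)

/-- M-product powers of a square tensor. -/
noncomputable def mpow {m p : ℕ} (M : Matrix (Fin p) (Fin p) ℂ) (A : Tensor m m p) :
    ℕ → Tensor m m p
  | 0 => idT M m
  | k + 1 => mprod M A (mpow M A k)

/-- `R_M(A)`: the column space of `mat(A)`. -/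
noncomputable def rangeM {m n p : ℕ} (M : Matrix (Fin p) (Fin p) ℂ) (A : Tensor m n p) :
    Submodule ℂ (Fin m × Fin p → ℂ) :=
  LinearMap.range (matT M A).mulVecLin

/-- `N_M(A)`: the kernel of `mat(A)`. -/
noncomputable def kerM {m n p : ℕ} (M : Matrix (Fin p) (Fin p) ℂ) (A : Tensor m n p) :
    Submodule ℂ (Fin n × Fin p → ℂ) :=
  LinearMap.ker (matT M A).mulVecLin

/-- `rank_M(A) = rank(mat(A))`. -/
noncomputable def rankM {m n p : ℕ} (M : Matrix (Fin p) (Fin p) ℂ) (A : Tensor m n p) : ℕ :=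
  (matT M A).rank

/-- The first `s` lateral slices `Q(:,1:s,:)`. -/
def latSlice {n s p : ℕ} (hsn : s ≤ n) (Q : Tensor n n p) : Tensor n s p :=
  fun l => (Q l).submatrix id (Fin.castLE hsn)

/-- The first `s` horizontal slices `R(1:s,:,:)`. -/
def horSlice {n m s p : ℕ} (hsn : s ≤ n) (R : Tensor n m p) : Tensor s m p :=
  fun l => (R l).submatrix (Fin.castLE hsn) id

/-- Frobenius norm of a complex matrix. -/
noncomputable def frobNorm {α β : Type*} [Fintype α] [Fintype β] (X : Matrix α β ℂ) : ℝ :=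
  Real.sqrt (∑ i, ∑ j, ‖X i j‖ ^ 2)

/-!
Under `mat`, the M-product becomes multiplication of block-diagonal matrices, so it suffices to
study the matrices `a = mat A`, `x = mat A†` and `z j = mat Z_j`. The projector `P = a x` and the
residual `E j = P - a z j` satisfy `P E = E = E P` (for `j = 0` by the Penrose equations), so
`1 - a z j = (1 - P) + E j` is an orthogonal splitting and `(1 - a z j) ^ k = (1 - P) + E j ^ k`
for `k ≥ 1`. Multiplying the geometric sum by `a z j = P - E j` therefore gives
`a z (j+1) = P - E j ^ q`, i.e. `E (j+1) = E j ^ q`, and the invariant persists. Hence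
`E j = E 0 ^ (q ^ j)`, and `x - z j = x E j` yields the bound by submultiplicativity of the
Frobenius norm.
-/

open Filter Topology

section Corner

variable {R : Type*} [Ring R] {P E : R}

theorem one_sub_sub_pow_succ (hP : IsIdempotentElem P) (hPE : P * E = E) (hEP : E * P = E)
    (n : ℕ) : (1 - (P - E)) ^ (n + 1) = (1 - P) + E ^ (n + 1) := by
  induction n with
  | zero => simp only [zero_add, pow_one]; abel
  | succ n ih =>
    have hPc : (1 - P) * (1 - P) = 1 - P := hP.one_sub
    have hPcE : (1 - P) * E = 0 := by rw [sub_mul, one_mul, hPE, sub_self]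
    have hEPc : E ^ (n + 1) * (1 - P) = 0 := by
      rw [pow_succ, mul_assoc, mul_sub, mul_one, hEP, sub_self, mul_zero]
    have hsplit : 1 - (P - E) = (1 - P) + E := by abel
    rw [pow_succ, ih, hsplit, add_mul, mul_add, mul_add, hPc, hPcE, hEPc, ← pow_succ]
    abel

theorem mul_geom_sum_one_sub_sub (hP : IsIdempotentElem P) (hPE : P * E = E) (hEP : E * P = E)
    {q : ℕ} (hq : 0 < q) :
    (P - E) * ∑ k ∈ range q, (1 - (P - E)) ^ k = P - E ^ q := by
  obtain ⟨n, rfl⟩ := Nat.exists_eq_add_of_lt hq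
  have h := mul_neg_geom_sum (1 - (P - E)) (n + 1)
  rw [sub_sub_cancel, one_sub_sub_pow_succ hP hPE hEP] at h
  rw [zero_add, h]
  abel

theorem pow_mul_eq_pow_of_mul_eq (hEP : E * P = E) {q : ℕ} (hq : 0 < q) : E ^ q * P = E ^ q := by
  obtain ⟨n, rfl⟩ := Nat.exists_eq_add_of_lt hq
  rw [zero_add, pow_succ, mul_assoc, hEP]

end Corner

theorem tendsto_pow_pow_atTop_nhds_zero {r : ℝ} (hr0 : 0 ≤ r) (hr1 : r < 1) {q : ℕ}
    (hq : 1 < q) : Tendsto (fun j : ℕ => r ^ q ^ j) atTop (𝓝 0) :=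
  (tendsto_pow_atTop_nhds_zero_of_lt_one hr0 hr1).comp (tendsto_pow_atTop_atTop_of_one_lt hq)

namespace Matrix

section Hyperpower

variable {R ι κ : Type*} [Fintype ι] [Fintype κ]

structure IsMoorePenroseInverse [Semiring R] [StarRing R] (a : Matrix κ ι R) (x : Matrix ι κ R) :
    Prop where
  penrose₁ : a * x * a = a
  penrose₂ : x * a * x = x
  penrose₃ : (a * x)ᴴ = a * x
  penrose₄ : (x * a)ᴴ = x * a

def IsHyperpowerIteration [Ring R] [DecidableEq κ] (q : ℕ) (a : Matrix κ ι R)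
    (z : ℕ → Matrix ι κ R) : Prop :=
  ∀ j, z (j + 1) = z j * ∑ k ∈ range q, (1 - a * z j) ^ k

theorem isIdempotentElem_mul_of_mul_mul_eq [Semiring R] {a : Matrix κ ι R} {x : Matrix ι κ R}
    (h : a * x * a = a) : IsIdempotentElem (a * x) := by
  rw [IsIdempotentElem, ← Matrix.mul_assoc, h]

theorem hyperpower_step [Ring R] [DecidableEq κ] {a : Matrix κ ι R} {x : Matrix ι κ R}
    (h : a * x * a = a) {q : ℕ} (hq : 0 < q) {z z' : Matrix ι κ R}
    (hzP : a * z * (a * x) = a * z) (hz' : z' = z * ∑ k ∈ range q, (1 - a * z) ^ k) :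
    a * z' = a * x - (a * x - a * z) ^ q ∧ a * z' * (a * x) = a * z' := by
  have hP := isIdempotentElem_mul_of_mul_mul_eq h
  have hPE : a * x * (a * x - a * z) = a * x - a * z := by
    rw [Matrix.mul_sub, hP.eq, ← Matrix.mul_assoc, h]
  have hEP : (a * x - a * z) * (a * x) = a * x - a * z := by rw [Matrix.sub_mul, hP.eq, hzP]
  have hstep : a * z' = a * x - (a * x - a * z) ^ q := by
    rw [hz', ← Matrix.mul_assoc]
    simpa only [sub_sub_cancel] using mul_geom_sum_one_sub_sub hP hPE hEP hq
  refine ⟨hstep, ?_⟩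
  rw [hstep, Matrix.sub_mul, hP.eq, pow_mul_eq_pow_of_mul_eq hEP hq]

namespace IsMoorePenroseInverse

variable [CommRing R] [StarRing R] {a : Matrix κ ι R} {x : Matrix ι κ R}

theorem mul_mul_conjTranspose (hx : IsMoorePenroseInverse a x) : x * a * aᴴ = aᴴ := by
  rw [← hx.penrose₄, ← conjTranspose_mul, ← Matrix.mul_assoc, hx.penrose₁]

theorem conjTranspose_mul_mul (hx : IsMoorePenroseInverse a x) : aᴴ * (a * x) = aᴴ := by
  rw [← hx.penrose₃, ← conjTranspose_mul, hx.penrose₁]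

variable [DecidableEq κ] {q : ℕ} {c : R} {z : ℕ → Matrix ι κ R}

theorem hyperpower_invariant (hx : IsMoorePenroseInverse a x) (hq : 0 < q)
    (hz0 : z 0 = c • aᴴ) (hz : IsHyperpowerIteration q a z) (j : ℕ) :
    x * a * z j = z j ∧ a * z j * (a * x) = a * z j := by
  induction j with
  | zero =>
    rw [hz0, Matrix.mul_smul, hx.mul_mul_conjTranspose, Matrix.mul_smul, Matrix.smul_mul,
      Matrix.mul_assoc, hx.conjTranspose_mul_mul]
    exact ⟨rfl, rfl⟩
  | succ j ih =>
    refine ⟨by rw [hz j, ← Matrix.mul_assoc, ih.1], ?_⟩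
    exact (hyperpower_step hx.penrose₁ hq ih.2 (hz j)).2

theorem hyperpower_residual_eq_pow (hx : IsMoorePenroseInverse a x) (hq : 0 < q)
    (hz0 : z 0 = c • aᴴ) (hz : IsHyperpowerIteration q a z) (j : ℕ) :
    a * x - a * z j = (a * x - a * z 0) ^ q ^ j := by
  induction j with
  | zero => rw [pow_zero, pow_one]
  | succ j ih =>
    have hinv := hx.hyperpower_invariant hq hz0 hz j
    rw [(hyperpower_step hx.penrose₁ hq hinv.2 (hz j)).1, sub_sub_cancel, ih, ← pow_mul,
      ← pow_succ]

theorem sub_hyperpower_eq_mul_pow (hx : IsMoorePenroseInverse a x) (hq : 0 < q)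
    (hz0 : z 0 = c • aᴴ) (hz : IsHyperpowerIteration q a z) (j : ℕ) :
    x - z j = x * (a * x - a * z 0) ^ q ^ j := by
  rw [← hx.hyperpower_residual_eq_pow hq hz0 hz, Matrix.mul_sub, ← Matrix.mul_assoc,
    ← Matrix.mul_assoc, hx.penrose₂, (hx.hyperpower_invariant hq hz0 hz j).1]

end IsMoorePenroseInverse

end Hyperpower

section Frobenius

attribute [local instance] frobeniusSeminormedAddCommGroup frobeniusNormedRing

namespace IsMoorePenroseInverse

variable {𝕜 ι κ : Type*} [RCLike 𝕜] [Fintype ι] [Fintype κ] [DecidableEq κ]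
  {a : Matrix κ ι 𝕜} {x : Matrix ι κ 𝕜} {q : ℕ} {c : 𝕜} {z : ℕ → Matrix ι κ 𝕜}

theorem norm_sub_hyperpower_le (hx : IsMoorePenroseInverse a x) (hq : 0 < q)
    (hz0 : z 0 = c • aᴴ) (hz : IsHyperpowerIteration q a z) (j : ℕ) :
    ‖x - z j‖ ≤ ‖x‖ * ‖a * x - a * z 0‖ ^ q ^ j := by
  rw [hx.sub_hyperpower_eq_mul_pow hq hz0 hz]
  exact (frobenius_norm_mul _ _).trans
    (mul_le_mul_of_nonneg_left (norm_pow_le' _ (pow_pos hq j)) (norm_nonneg _))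

theorem tendsto_hyperpower (hx : IsMoorePenroseInverse a x) (hq : 1 < q)
    (hz0 : z 0 = c • aᴴ) (hz : IsHyperpowerIteration q a z) (h : ‖a * x - a * z 0‖ < 1) :
    Tendsto z atTop (𝓝 x) := by
  have hbound : Tendsto (fun j => ‖x‖ * ‖a * x - a * z 0‖ ^ q ^ j) atTop (𝓝 0) := by
    simpa using (tendsto_pow_pow_atTop_nhds_zero (norm_nonneg _) h hq).const_mul ‖x‖
  refine tendsto_iff_norm_sub_tendsto_zero.2 (squeeze_zero (fun _ => norm_nonneg _) ?_ hbound)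
  intro j
  rw [norm_sub_rev]
  exact hx.norm_sub_hyperpower_le (zero_lt_one.trans hq) hz0 hz j

end IsMoorePenroseInverse

end Frobenius

end Matrix

section MProduct

variable {m n k p : ℕ} {M : Matrix (Fin p) (Fin p) ℂ}

theorem hatT_sum_inv_smul (hM : IsUnit M.det) (C : Tensor m n p) :
    hatT M (fun l => ∑ s, M⁻¹ l s • C s) = C := by
  funext l
  simp only [hatT, Finset.smul_sum, smul_smul]
  rw [Finset.sum_comm]
  simp_rw [← Finset.sum_smul, ← Matrix.mul_apply, Matrix.mul_nonsing_inv _ hM, Matrix.one_apply,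
    ite_smul, one_smul, zero_smul, Finset.sum_ite_eq, Finset.mem_univ, if_true]

theorem sum_inv_smul_hatT (hM : IsUnit M.det) (A : Tensor m n p) :
    (fun l => ∑ s, M⁻¹ l s • hatT M A s) = A := by
  funext l
  simp only [hatT, Finset.smul_sum, smul_smul]
  rw [Finset.sum_comm]
  simp_rw [← Finset.sum_smul, ← Matrix.mul_apply, Matrix.nonsing_inv_mul _ hM, Matrix.one_apply,
    ite_smul, one_smul, zero_smul, Finset.sum_ite_eq, Finset.mem_univ, if_true]

theorem matT_mprod (hM : IsUnit M.det) (A : Tensor m n p) (B : Tensor n k p) :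
    matT M (mprod M A B) = matT M A * matT M B := by
  rw [matT, matT, matT, ← blockDiagonal_mul]
  exact congrArg blockDiagonal (hatT_sum_inv_smul hM _)

theorem matT_mstar (hM : IsUnit M.det) (A : Tensor m n p) :
    matT M (mstar M A) = (matT M A)ᴴ := by
  rw [matT, matT, blockDiagonal_conjTranspose]
  exact congrArg blockDiagonal (hatT_sum_inv_smul hM _)

theorem matT_idT (hM : IsUnit M.det) : matT M (idT M m) = 1 := by
  rw [matT, ← blockDiagonal_one]
  exact congrArg blockDiagonal (hatT_sum_inv_smul hM _)

variable (M) in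
noncomputable def matTLinearMap :
    Tensor m n p →ₗ[ℂ] Matrix (Fin m × Fin p) (Fin n × Fin p) ℂ where
  toFun := matT M
  map_add' A B := by
    simp only [matT, ← blockDiagonal_add]
    congr 1
    funext l
    simp only [hatT, Pi.add_apply, smul_add, Finset.sum_add_distrib]
  map_smul' c A := by
    simp only [matT, RingHom.id_apply, ← blockDiagonal_smul]
    congr 1
    funext l
    simp only [hatT, Pi.smul_apply, smul_comm _ c, Finset.smul_sum]

theorem matT_sub (A B : Tensor m n p) : matT M (A - B) = matT M A - matT M B :=
  map_sub (matTLinearMap M) A B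

theorem matT_smul (c : ℂ) (A : Tensor m n p) : matT M (c • A) = c • matT M A :=
  map_smul (matTLinearMap M) c A

theorem matT_sum {ι : Type*} (s : Finset ι) (f : ι → Tensor m n p) :
    matT M (∑ i ∈ s, f i) = ∑ i ∈ s, matT M (f i) :=
  map_sum (matTLinearMap M) f s

theorem matT_mpow (hM : IsUnit M.det) (A : Tensor m m p) (j : ℕ) :
    matT M (mpow M A j) = matT M A ^ j := by
  induction j with
  | zero => exact matT_idT hM
  | succ j ih => rw [mpow, matT_mprod hM, ih, pow_succ']

theorem isMoorePenroseInverse_matT (hM : IsUnit M.det) {A : Tensor m n p} {X : Tensor n m p}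
    (h1 : mprod M A (mprod M X A) = A) (h2 : mprod M X (mprod M A X) = X)
    (h3 : mstar M (mprod M A X) = mprod M A X) (h4 : mstar M (mprod M X A) = mprod M X A) :
    (matT M A).IsMoorePenroseInverse (matT M X) where
  penrose₁ := by simpa only [matT_mprod hM, Matrix.mul_assoc] using congrArg (matT M) h1
  penrose₂ := by simpa only [matT_mprod hM, Matrix.mul_assoc] using congrArg (matT M) h2
  penrose₃ := by simpa only [matT_mstar hM, matT_mprod hM] using congrArg (matT M) h3
  penrose₄ := by simpa only [matT_mstar hM, matT_mprod hM] using congrArg (matT M) h4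

theorem isHyperpowerIteration_matT (hM : IsUnit M.det) {q : ℕ} {A : Tensor m n p}
    {Z : ℕ → Tensor n m p}
    (hZ : ∀ j, Z (j + 1) = mprod M (Z j) (∑ k ∈ range q, mpow M (idT M m - mprod M A (Z j)) k)) :
    IsHyperpowerIteration q (matT M A) (fun j => matT M (Z j)) := fun j => by
  simp only [hZ j, matT_mprod hM, matT_sum, matT_mpow hM, matT_sub, matT_idT hM]

theorem apply_eq_sum_inv_mul_matT (hM : IsUnit M.det) (A : Tensor m n p) (l : Fin p) (i : Fin m)
    (j : Fin n) : A l i j = ∑ s, M⁻¹ l s * matT M A (i, s) (j, s) := by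
  conv_lhs => rw [← sum_inv_smul_hatT hM A]
  simp [matT, blockDiagonal_apply_eq, Matrix.sum_apply]

theorem tendsto_of_tendsto_matT (hM : IsUnit M.det) {ι : Type*} {F : Filter ι}
    {Z : ι → Tensor m n p} {A : Tensor m n p}
    (h : Tendsto (fun t => matT M (Z t)) F (𝓝 (matT M A))) : Tendsto Z F (𝓝 A) := by
  let unmat : Matrix (Fin m × Fin p) (Fin n × Fin p) ℂ → Tensor m n p :=
    fun B l i j => ∑ s, M⁻¹ l s * B (i, s) (j, s)
  have hunmat : ∀ B : Tensor m n p, unmat (matT M B) = B := fun B => by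
    funext l i j
    exact (apply_eq_sum_inv_mul_matT hM B l i j).symm
  have hcont : Continuous unmat := by fun_prop
  simpa only [Function.comp_def, hunmat] using (hcont.tendsto _).comp h

end MProduct

section FrobeniusNorm

attribute [local instance] frobeniusSeminormedAddCommGroup

theorem frobNorm_eq_norm {α β : Type*} [Fintype α] [Fintype β] (X : Matrix α β ℂ) :
    frobNorm X = ‖X‖ := by
  rw [frobenius_norm_def, frobNorm, Real.sqrt_eq_rpow]
  norm_num

/-- Corollary 4.3 (Moore–Penrose case): the 19th-order hyperpower iteration started at
`Z₀ = α·A^*` converges to the Moore–Penrose inverse `A†` with the stated bound. -/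
theorem hpi19_converges_to_moore_penrose {m n p : ℕ}
    (M : Matrix (Fin p) (Fin p) ℂ) (hM : IsUnit M.det)
    (A : Tensor m n p) (X : Tensor n m p)
    (h1 : mprod M A (mprod M X A) = A)
    (h2 : mprod M X (mprod M A X) = X)
    (h3 : mstar M (mprod M A X) = mprod M A X)
    (h4 : mstar M (mprod M X A) = mprod M X A)
    (α : ℂ) (Z : ℕ → Tensor n m p)
    (hZ0 : Z 0 = α • mstar M A)
    (hZ : ∀ j, Z (j + 1) =
      mprod M (Z j) (∑ k ∈ Finset.range 19, mpow M (idT M m - mprod M A (Z j)) k))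
    (hinit : frobNorm (matT M (mprod M A X - mprod M A (Z 0))) < 1) :
    (∀ j, frobNorm (matT M (X - Z j)) ≤
        frobNorm (matT M X) *
          frobNorm (matT M (mprod M A X - mprod M A (Z 0))) ^ (19 ^ j)) ∧
      ∀ (l : Fin p) (i : Fin n) (j : Fin m),
        Filter.Tendsto (fun t => Z t l i j) Filter.atTop (nhds (X l i j)) := by
  have hx := isMoorePenroseInverse_matT hM h1 h2 h3 h4
  have hz := isHyperpowerIteration_matT hM hZ
  have hz0 : matT M (Z 0) = α • (matT M A)ᴴ := by rw [hZ0, matT_smul, matT_mstar hM]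
  have hres : matT M (mprod M A X - mprod M A (Z 0)) =
      matT M A * matT M X - matT M A * matT M (Z 0) := by
    rw [matT_sub, matT_mprod hM, matT_mprod hM]
  rw [frobNorm_eq_norm, hres] at hinit
  refine ⟨fun j => ?_, fun l i j => ?_⟩
  · simpa only [frobNorm_eq_norm, matT_sub, hres] using
      hx.norm_sub_hyperpower_le (by norm_num) hz0 hz j
  · have hZX := tendsto_of_tendsto_matT hM (hx.tendsto_hyperpower (by norm_num) hz0 hz hinit)
    exact tendsto_pi_nhds.1 (tendsto_pi_nhds.1 (tendsto_pi_nhds.1 hZX l) i) j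

end FrobeniusNorm
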